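/- arXiv:2001.07312 — 4 statements merged into one kernel-verified Lean document; each statement's English description precedes it below -/
import Mathlib

section
/- The maps e'_{il} and e''_{il} preserve the radical of the bilinear form (·,·)_L on F: if x is in the radical, then so are e'_{il}(x) and e''_{il}(x). -/
noncomputable section
open scoped TensorProduct

/-- The base field `ℚ(q)`. -/
abbrev Kq := RatFunc ℚ

/-- The free associative `ℚ(q)`-algebra `F` on the generators `t_{il}`, `(i,l) ∈ I^∞`,
realized as the monoid algebra of the free monoid on `I × ℕ` (the generator `(i, l)`
standing for `t_{il}`). -/
abbrev FA (ι : Type) := MonoidAlgebra Kq (FreeMonoid ι)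

/-- The generator `t_{il}`. -/
def gen {ι : Type} (j : ι) : FA ι := MonoidAlgebra.of Kq (FreeMonoid ι) (FreeMonoid.of j)

/-- The root lattice `Q = ⊕_{i ∈ I} ℤ α_i`. -/
abbrev RootLat (I : Type) := I →₀ ℤ

/-- The degree `|t_{il}| = -l·α_i` of the generator `t_{il}`. -/
def rootw {I : Type} (p : I × ℕ) : RootLat I := Finsupp.single p.1 (-(p.2 : ℤ))

/-- The symmetric bilinear form on the root lattice, `(α_i, α_j) = r_i a_{ij}` for the
symmetrizable Borcherds-Cartan matrix `aa` with symmetrizers `r`. -/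
def pairB {I : Type} (r : I → ℤ) (aa : I → I → ℤ) (x y : RootLat I) : ℤ :=
  x.sum fun i xi => y.sum fun j yj => xi * yj * (r i * aa i j)

/-- The degree of a word in the generators. -/
def degw {I : Type} (m : FreeMonoid (I × ℕ)) : RootLat I := (m.toList.map rootw).sum

/-- `x ∈ F` is homogeneous of degree `d`. -/
def IsHomog {I : Type} (d : RootLat I) (x : FA (I × ℕ)) : Prop :=
  ∀ m ∈ x.coeff.support, degw m = d

/-- The monomial basis of `F`. -/
def bF (ι : Type) : Module.Basis (FreeMonoid ι) Kq (FA ι) := MonoidAlgebra.basis (FreeMonoid ι) Kq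

/-- The induced monomial basis of `F ⊗ F`. -/
def bFF (ι : Type) : Module.Basis (FreeMonoid ι × FreeMonoid ι) Kq (FA ι ⊗[Kq] FA ι) :=
  (bF ι).tensorProduct (bF ι)

/-- The twisted multiplication on `F ⊗ F`:
`(x₁ ⊗ x₂)(y₁ ⊗ y₂) = q^{-(|x₂|,|y₁|)} x₁y₁ ⊗ x₂y₂` for homogeneous `x₂, y₁`. -/
def tmulT {I : Type} (r : I → ℤ) (aa : I → I → ℤ) :
    (FA (I × ℕ) ⊗[Kq] FA (I × ℕ)) →ₗ[Kq] (FA (I × ℕ) ⊗[Kq] FA (I × ℕ)) →ₗ[Kq]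
      (FA (I × ℕ) ⊗[Kq] FA (I × ℕ)) :=
  (bFF (I × ℕ)).constr Kq fun p => (bFF (I × ℕ)).constr Kq fun s =>
    ((RatFunc.X : Kq) ^ (-(pairB r aa (degw p.2) (degw s.1)))) •
      (bFF (I × ℕ)) (p.1 * s.1, p.2 * s.2)

/-- `E` is the twisted derivation `e'_{il}` (for `i0 = (i,l)`):
`e'_{il}(1) = 0`, `e'_{il}(t_{jk}) = δ_{ij}δ_{lk}`, and
`e'_{il}(xy) = e'_{il}(x)y + q^{l(|x|,α_i)} x e'_{il}(y)` for homogeneous `x, y`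
(note `l(|x|, α_i) = -(|x|, |t_{il}|)`). -/
def IsEprime {I : Type} [DecidableEq I] (r : I → ℤ) (aa : I → I → ℤ) (i0 : I × ℕ)
    (E : FA (I × ℕ) →ₗ[Kq] FA (I × ℕ)) : Prop :=
  E 1 = 0 ∧ (∀ p : I × ℕ, E (gen p) = if p = i0 then 1 else 0) ∧
  ∀ (d d' : RootLat I) (x y : FA (I × ℕ)), IsHomog d x → IsHomog d' y →
    E (x * y) = E x * y + ((RatFunc.X : Kq) ^ (-(pairB r aa d (rootw i0)))) • (x * E y)

/-- `E` is the twisted derivation `e''_{il}`: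
`e''_{il}(1) = 0`, `e''_{il}(t_{jk}) = δ_{ij}δ_{lk}`, and
`e''_{il}(xy) = q^{l(|y|,α_i)} e''_{il}(x)y + x e''_{il}(y)` for homogeneous `x, y`. -/
def IsEdprime {I : Type} [DecidableEq I] (r : I → ℤ) (aa : I → I → ℤ) (i0 : I × ℕ)
    (E : FA (I × ℕ) →ₗ[Kq] FA (I × ℕ)) : Prop :=
  E 1 = 0 ∧ (∀ p : I × ℕ, E (gen p) = if p = i0 then 1 else 0) ∧
  ∀ (d d' : RootLat I) (x y : FA (I × ℕ)), IsHomog d x → IsHomog d' y →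
    E (x * y) = ((RatFunc.X : Kq) ^ (-(pairB r aa d' (rootw i0)))) • (E x * y) + x * E y

/-- `δd` is the co-multiplication `δ : F → F ⊗ F`: it is an algebra map for the twisted
multiplication on `F ⊗ F`, and `δ(t_{il}) = t_{il} ⊗ 1 + 1 ⊗ t_{il}`. -/
def IsCoprod {I : Type} (r : I → ℤ) (aa : I → I → ℤ)
    (δd : FA (I × ℕ) →ₗ[Kq] (FA (I × ℕ) ⊗[Kq] FA (I × ℕ))) : Prop :=
  δd 1 = 1 ⊗ₜ[Kq] 1 ∧ (∀ p : I × ℕ, δd (gen p) = gen p ⊗ₜ[Kq] 1 + 1 ⊗ₜ[Kq] gen p) ∧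
  ∀ x y : FA (I × ℕ), δd (x * y) = tmulT r aa (δd x) (δd y)

/-- The induced bilinear form on `F ⊗ F`: `(x₁⊗x₂, y₁⊗y₂)_L = (x₁,y₁)_L (x₂,y₂)_L`. -/
def LLb (ι : Type) (L : FA ι →ₗ[Kq] FA ι →ₗ[Kq] Kq) :
    (FA ι ⊗[Kq] FA ι) →ₗ[Kq] (FA ι ⊗[Kq] FA ι) →ₗ[Kq] Kq :=
  (bFF ι).constr Kq fun p => (bFF ι).constr Kq fun s =>
    L (bF ι p.1) (bF ι s.1) * L (bF ι p.2) (bF ι s.2)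

/-- `L` is the symmetric bilinear form `(·,·)_L` on `F`: `(1,1)_L = 1`,
`(t_{il}, t_{jk})_L = δ_{ij}δ_{lk} τ_{il}`, it vanishes on distinct degrees, and
`(x, yz)_L = (δ(x), y ⊗ z)_L`. -/
def IsLform {I : Type} [DecidableEq I] (r : I → ℤ) (aa : I → I → ℤ) (τ : I × ℕ → Kq)
    (δd : FA (I × ℕ) →ₗ[Kq] (FA (I × ℕ) ⊗[Kq] FA (I × ℕ)))
    (L : FA (I × ℕ) →ₗ[Kq] FA (I × ℕ) →ₗ[Kq] Kq) : Prop :=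
  (∀ x y, L x y = L y x) ∧ (L 1 1 = 1) ∧
  (∀ p p' : I × ℕ, L (gen p) (gen p') = if p = p' then τ p else 0) ∧
  (∀ (d d' : RootLat I) (x y : FA (I × ℕ)),
      IsHomog d x → IsHomog d' y → d ≠ d' → L x y = 0) ∧
  (∀ x y z : FA (I × ℕ), L x (y * z) = LLb (I × ℕ) L (δd x) (y ⊗ₜ[Kq] z))


set_option maxHeartbeats 1000000
set_option synthInstance.maxHeartbeats 400000

namespace RadAux
open scoped Classical

variable {I : Type}

/-! ### root lattice lemmas -/

lemma pairB_symm (r : I → ℤ) (aa : I → I → ℤ) (hsym : ∀ i j, r i * aa i j = r j * aa j i)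
    (x y : RootLat I) : pairB r aa x y = pairB r aa y x := by
  unfold pairB
  rw [Finsupp.sum_comm]
  refine Finsupp.sum_congr fun j _ => Finsupp.sum_congr fun i _ => ?_
  rw [← hsym]; ring

lemma pairB_zero_right (r : I → ℤ) (aa : I → I → ℤ) (x : RootLat I) :
    pairB r aa x 0 = 0 := by
  unfold pairB
  simp [Finsupp.sum_zero_index]

lemma pairB_zero_left (r : I → ℤ) (aa : I → I → ℤ) (y : RootLat I) :
    pairB r aa 0 y = 0 := by
  unfold pairB
  simp [Finsupp.sum_zero_index]

lemma pairB_add_right (r : I → ℤ) (aa : I → I → ℤ) (x y z : RootLat I) :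
    pairB r aa x (y + z) = pairB r aa x y + pairB r aa x z := by
  unfold pairB
  rw [← Finsupp.sum_add]
  refine Finsupp.sum_congr fun i _ => ?_
  rw [Finsupp.sum_add_index' (fun a => by ring) (fun a b₁ b₂ => by ring)]

lemma degw_one : degw (1 : FreeMonoid (I × ℕ)) = 0 := rfl

lemma degw_of (p : I × ℕ) : degw (FreeMonoid.of p) = rootw p := by
  simp [degw]

lemma degw_mul (a b : FreeMonoid (I × ℕ)) : degw (a * b) = degw a + degw b := by
  simp [degw, FreeMonoid.toList_mul]

/-! ### basis / monoid algebra lemmas -/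

lemma bF_apply (ι : Type) (m : FreeMonoid ι) : bF ι m = MonoidAlgebra.single m 1 := rfl

lemma bF_one (ι : Type) : bF ι 1 = 1 := rfl

lemma gen_eq {ι : Type} (p : ι) : gen p = bF ι (FreeMonoid.of p) := rfl

lemma bF_mul {ι : Type} (a b : FreeMonoid ι) : bF ι a * bF ι b = bF ι (a * b) := by
  simp [bF_apply, MonoidAlgebra.single_mul_single]

lemma gen_mul_bF {ι : Type} (p : ι) (m : FreeMonoid ι) :
    gen p * bF ι m = bF ι (FreeMonoid.of p * m) := by
  rw [gen_eq, bF_mul]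

lemma isHomog_bF (m : FreeMonoid (I × ℕ)) : IsHomog (degw m) (bF (I × ℕ) m) := by
  intro s hs
  have h1 : s ∈ (Finsupp.single m (1:Kq)).support := hs
  rw [Finsupp.support_single_ne_zero m one_ne_zero] at h1
  simp at h1; rw [h1]

lemma isHomog_gen (p : I × ℕ) : IsHomog (rootw p) (gen p) := by
  rw [gen_eq, ← degw_of p]; exact isHomog_bF _

lemma of_mul_ne_one {ι : Type} (p : ι) (m : FreeMonoid ι) : FreeMonoid.of p * m ≠ 1 := by
  intro h
  have := congrArg FreeMonoid.toList h
  simp [FreeMonoid.toList_mul] at this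

lemma of_mul_eq_of_iff {ι : Type} (p q : ι) (m : FreeMonoid ι) :
    FreeMonoid.of p * m = FreeMonoid.of q ↔ p = q ∧ m = 1 := by
  constructor
  · intro h
    have := congrArg FreeMonoid.toList h
    simp [FreeMonoid.toList_mul] at this
    obtain ⟨h1, h2⟩ := this
    exact ⟨h1, FreeMonoid.toList.injective (by simpa using h2)⟩
  · rintro ⟨rfl, rfl⟩; simp

/-! ### tensor auxiliary maps -/

def pairT {ι : Type} (L : FA ι →ₗ[Kq] FA ι →ₗ[Kq] Kq) :
    (FA ι ⊗[Kq] FA ι) →ₗ[Kq] (FA ι ⊗[Kq] FA ι) →ₗ[Kq] Kq :=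
  TensorProduct.lift (LinearMap.mk₂ Kq
    (fun a b => TensorProduct.lift (LinearMap.mk₂ Kq (fun c d => L a c * L b d)
      (fun c c' d => by simp [add_mul])
      (fun s c d => by simp; ring)
      (fun c d d' => by simp [mul_add])
      (fun s c d => by simp; ring)))
    (fun a a' b => by
      apply TensorProduct.ext'; intro c d
      simp [add_mul])
    (fun s a b => by
      apply TensorProduct.ext'; intro c d
      simp; ring)
    (fun a b b' => by
      apply TensorProduct.ext'; intro c d
      simp [mul_add])
    (fun s a b => by
      apply TensorProduct.ext'; intro c d
      simp; ring))

@[simp] lemma pairT_tmul {ι : Type} (L : FA ι →ₗ[Kq] FA ι →ₗ[Kq] Kq) (a b c d : FA ι) :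
    pairT L (a ⊗ₜ[Kq] b) (c ⊗ₜ[Kq] d) = L a c * L b d := by
  simp [pairT]

lemma bFF_apply (ι : Type) (s : FreeMonoid ι × FreeMonoid ι) :
    bFF ι s = bF ι s.1 ⊗ₜ[Kq] bF ι s.2 := Module.Basis.tensorProduct_apply' _ _ _

lemma LLb_eq_pairT (ι : Type) (L : FA ι →ₗ[Kq] FA ι →ₗ[Kq] Kq) : LLb ι L = pairT L := by
  apply (bFF ι).ext; intro p
  apply (bFF ι).ext; intro s
  rw [LLb, Module.Basis.constr_basis, Module.Basis.constr_basis, bFF_apply, bFF_apply, pairT_tmul]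

def Pleft {ι : Type} (L : FA ι →ₗ[Kq] FA ι →ₗ[Kq] Kq) (g : FA ι) :
    (FA ι ⊗[Kq] FA ι) →ₗ[Kq] FA ι :=
  TensorProduct.lift (LinearMap.mk₂ Kq (fun a b => L a g • b)
    (fun a a' b => by simp [add_smul])
    (fun s a b => by simp [mul_smul])
    (fun a b b' => by simp [smul_add])
    (fun s a b => by rw [smul_comm]))

@[simp] lemma Pleft_tmul {ι : Type} (L : FA ι →ₗ[Kq] FA ι →ₗ[Kq] Kq) (g a b : FA ι) :
    Pleft L g (a ⊗ₜ[Kq] b) = L a g • b := by simp [Pleft]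

def Pright {ι : Type} (L : FA ι →ₗ[Kq] FA ι →ₗ[Kq] Kq) (g : FA ι) :
    (FA ι ⊗[Kq] FA ι) →ₗ[Kq] FA ι :=
  TensorProduct.lift (LinearMap.mk₂ Kq (fun a b => L b g • a)
    (fun a a' b => by simp [smul_add])
    (fun s a b => by rw [smul_comm])
    (fun a b b' => by simp [add_smul])
    (fun s a b => by simp [mul_smul]))

@[simp] lemma Pright_tmul {ι : Type} (L : FA ι →ₗ[Kq] FA ι →ₗ[Kq] Kq) (g a b : FA ι) :
    Pright L g (a ⊗ₜ[Kq] b) = L b g • a := by simp [Pright]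

def εF (ι : Type) : FA ι →ₗ[Kq] Kq :=
  (Finsupp.lapply 1).comp (MonoidAlgebra.coeffLinearEquiv Kq).toLinearMap

@[simp] lemma εF_bF (ι : Type) (m : FreeMonoid ι) :
    εF ι (bF ι m) = if m = 1 then 1 else 0 := by
  show (Finsupp.single m (1:Kq)) 1 = _
  rw [Finsupp.single_apply]

lemma εF_one (ι : Type) : εF ι 1 = 1 := by
  show εF ι (bF ι 1) = 1
  rw [εF_bF]; simp

def Eε (ι : Type) : (FA ι ⊗[Kq] FA ι) →ₗ[Kq] FA ι :=
  TensorProduct.lift (LinearMap.mk₂ Kq (fun a b => εF ι a • b)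
    (fun a a' b => by simp [add_smul])
    (fun s a b => by simp [mul_smul])
    (fun a b b' => by simp [smul_add])
    (fun s a b => by rw [smul_comm]))

@[simp] lemma Eε_tmul (ι : Type) (a b : FA ι) : Eε ι (a ⊗ₜ[Kq] b) = εF ι a • b := by
  simp [Eε]

/-! ### tmulT on basis elements -/

variable (r : I → ℤ) (aa : I → I → ℤ)

lemma tmulT_basis (p s : FreeMonoid (I × ℕ) × FreeMonoid (I × ℕ)) :
    tmulT r aa (bFF (I × ℕ) p) (bFF (I × ℕ) s)
      = ((RatFunc.X : Kq) ^ (-(pairB r aa (degw p.2) (degw s.1)))) •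
        (bFF (I × ℕ)) (p.1 * s.1, p.2 * s.2) := by
  rw [tmulT, Module.Basis.constr_basis, Module.Basis.constr_basis]

lemma gen_tmul_one (p : I × ℕ) :
    (gen p ⊗ₜ[Kq] (1 : FA (I × ℕ))) = bFF (I × ℕ) (FreeMonoid.of p, 1) := by
  rw [bFF_apply]; rfl

lemma one_tmul_gen (p : I × ℕ) :
    ((1 : FA (I × ℕ)) ⊗ₜ[Kq] gen p) = bFF (I × ℕ) (1, FreeMonoid.of p) := by
  rw [bFF_apply]; rfl

lemma tmulT_A_basis (p : I × ℕ) (s : FreeMonoid (I × ℕ) × FreeMonoid (I × ℕ)) :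
    tmulT r aa (gen p ⊗ₜ[Kq] (1 : FA (I × ℕ))) (bFF (I × ℕ) s)
      = bFF (I × ℕ) (FreeMonoid.of p * s.1, s.2) := by
  rw [gen_tmul_one, tmulT_basis]
  simp [degw_one, pairB_zero_left]

lemma tmulT_B_basis (p : I × ℕ) (s : FreeMonoid (I × ℕ) × FreeMonoid (I × ℕ)) :
    tmulT r aa ((1 : FA (I × ℕ)) ⊗ₜ[Kq] gen p) (bFF (I × ℕ) s)
      = ((RatFunc.X : Kq) ^ (-(pairB r aa (rootw p) (degw s.1)))) •
        bFF (I × ℕ) (s.1, FreeMonoid.of p * s.2) := by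
  rw [one_tmul_gen, tmulT_basis]
  simp [degw_of]

end RadAux

section RadMain
open RadAux
open scoped Classical

variable {I : Type} [DecidableEq I] (r : I → ℤ) (aa : I → I → ℤ)
  (hsym : ∀ i j, r i * aa i j = r j * aa j i) (i0 : I × ℕ)
  (δd : FA (I × ℕ) →ₗ[Kq] (FA (I × ℕ) ⊗[Kq] FA (I × ℕ))) (hδ : IsCoprod r aa δd)
  (τ : I × ℕ → Kq)
  (L : FA (I × ℕ) →ₗ[Kq] FA (I × ℕ) →ₗ[Kq] Kq) (hL : IsLform r aa τ δd L)

include hδ hL in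
lemma L_gen_one (p : I × ℕ) : L (gen p) 1 = 0 := by
  have h := hL.2.2.2.2 (gen p) 1 1
  rw [one_mul, LLb_eq_pairT, hδ.2.1 p, map_add, LinearMap.add_apply,
    pairT_tmul, pairT_tmul, hL.2.1] at h
  linear_combination -h

include hL hδ in
lemma L_one_bF (m : FreeMonoid (I × ℕ)) (hm : m ≠ 1) : L 1 (bF (I × ℕ) m) = 0 := by
  induction m using FreeMonoid.inductionOn' with
  | one => exact absurd rfl hm
  | of_mul p m' _ =>
    rw [← gen_mul_bF]
    have h := hL.2.2.2.2 1 (gen p) (bF (I × ℕ) m')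
    rw [LLb_eq_pairT, hδ.1, pairT_tmul] at h
    rw [h, hL.1 1 (gen p), L_gen_one r aa δd hδ τ L hL p, zero_mul]

include hL hδ in
lemma L_bF_gen (m : FreeMonoid (I × ℕ)) :
    L (bF (I × ℕ) m) (gen i0) = if m = FreeMonoid.of i0 then τ i0 else 0 := by
  induction m using FreeMonoid.inductionOn' with
  | one =>
    rw [bF_one, hL.1 1 (gen i0), L_gen_one r aa δd hδ τ L hL i0,
      if_neg (FreeMonoid.one_ne_of i0)]
  | of_mul p m' _ =>
    by_cases hm : m' = 1
    · subst hm
      rw [mul_one, ← gen_eq, hL.2.2.1 p i0]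
      by_cases hp : p = i0
      · subst hp; simp
      · rw [if_neg hp, if_neg (fun h => hp (FreeMonoid.of_injective h))]
    · rw [← gen_mul_bF, hL.1, hL.2.2.2.2 (gen i0) (gen p) (bF (I × ℕ) m'),
        LLb_eq_pairT, hδ.2.1 i0, map_add, LinearMap.add_apply, pairT_tmul, pairT_tmul]
      rw [L_one_bF r aa δd hδ τ L hL m' hm, hL.1 1 (gen p),
        L_gen_one r aa δd hδ τ L hL p,
        if_neg (fun h => hm ((of_mul_eq_of_iff p i0 m').mp h).2)]
      ring

/-! ### composition identities on `F ⊗ F` -/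

include hδ in
lemma comp_Eps_A (p : I × ℕ) :
    (Eε (I × ℕ)) ∘ₗ (tmulT r aa (gen p ⊗ₜ[Kq] (1 : FA (I × ℕ)))) = 0 := by
  apply (bFF (I × ℕ)).ext; intro s
  rw [LinearMap.comp_apply, tmulT_A_basis, bFF_apply, Eε_tmul, εF_bF]
  rw [if_neg (of_mul_ne_one p s.1)]
  simp

include hδ in
lemma comp_Eps_B (p : I × ℕ) :
    (Eε (I × ℕ)) ∘ₗ (tmulT r aa ((1 : FA (I × ℕ)) ⊗ₜ[Kq] gen p))
      = (LinearMap.mulLeft Kq (gen p)) ∘ₗ (Eε (I × ℕ)) := by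
  apply (bFF (I × ℕ)).ext; intro s
  obtain ⟨s1, s2⟩ := s
  rw [LinearMap.comp_apply, LinearMap.comp_apply, tmulT_B_basis, map_smul]
  by_cases hs : s1 = 1
  · subst hs
    simp [bFF_apply, εF_bF, degw_one, pairB_zero_right, gen_mul_bF]
  · simp [bFF_apply, εF_bF, hs]

/-- the weighted right-counit extraction map -/
noncomputable def Rw : (FA (I × ℕ) ⊗[Kq] FA (I × ℕ)) →ₗ[Kq] FA (I × ℕ) :=
  (bFF (I × ℕ)).constr Kq fun s =>
    if s.2 = 1 then ((RatFunc.X : Kq) ^ (-(pairB r aa (rootw i0) (degw s.1)))) • bF (I × ℕ) s.1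
    else 0

lemma Rw_basis (s : FreeMonoid (I × ℕ) × FreeMonoid (I × ℕ)) :
    Rw r aa i0 (bFF (I × ℕ) s)
      = if s.2 = 1 then
          ((RatFunc.X : Kq) ^ (-(pairB r aa (rootw i0) (degw s.1)))) • bF (I × ℕ) s.1
        else 0 := by
  rw [Rw, Module.Basis.constr_basis]

lemma comp_Rw_B (p : I × ℕ) :
    (Rw r aa i0) ∘ₗ (tmulT r aa ((1 : FA (I × ℕ)) ⊗ₜ[Kq] gen p)) = 0 := by
  apply (bFF (I × ℕ)).ext; intro s
  rw [LinearMap.comp_apply, tmulT_B_basis, map_smul, Rw_basis]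
  rw [if_neg (of_mul_ne_one p s.2)]
  simp

lemma comp_Rw_A (p : I × ℕ) :
    (Rw r aa i0) ∘ₗ (tmulT r aa (gen p ⊗ₜ[Kq] (1 : FA (I × ℕ))))
      = ((RatFunc.X : Kq) ^ (-(pairB r aa (rootw i0) (rootw p)))) •
        ((LinearMap.mulLeft Kq (gen p)) ∘ₗ (Rw r aa i0)) := by
  apply (bFF (I × ℕ)).ext; intro s
  rw [LinearMap.comp_apply, tmulT_A_basis, Rw_basis, LinearMap.smul_apply,
    LinearMap.comp_apply, Rw_basis, LinearMap.mulLeft_apply]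
  by_cases hs : s.2 = 1
  · rw [if_pos hs, if_pos hs]
    rw [degw_mul, degw_of, pairB_add_right, neg_add, zpow_add₀ RatFunc.X_ne_zero,
      mul_smul, mul_smul_comm, gen_mul_bF]
  · rw [if_neg hs, if_neg hs]
    simp

include hL hδ in
lemma comp_Pl_A (p : I × ℕ) :
    (Pleft L (gen i0)) ∘ₗ (tmulT r aa (gen p ⊗ₜ[Kq] (1 : FA (I × ℕ))))
      = if p = i0 then τ i0 • (Eε (I × ℕ)) else 0 := by
  apply (bFF (I × ℕ)).ext; intro s
  rw [LinearMap.comp_apply, tmulT_A_basis, bFF_apply, Pleft_tmul,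
    L_bF_gen r aa i0 δd hδ τ L hL]
  by_cases hp : p = i0
  · subst hp
    rw [if_pos rfl, LinearMap.smul_apply, bFF_apply, Eε_tmul, εF_bF]
    by_cases hs : s.1 = 1
    · rw [if_pos ((of_mul_eq_of_iff p p s.1).mpr ⟨rfl, hs⟩), if_pos hs, one_smul]
    · rw [if_neg (fun h => hs ((of_mul_eq_of_iff p p s.1).mp h).2), if_neg hs]
      simp
  · rw [if_neg (fun h => hp ((of_mul_eq_of_iff p i0 s.1).mp h).1), if_neg hp]
    simp

include hL hδ in
lemma comp_Pl_B (p : I × ℕ) :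
    (Pleft L (gen i0)) ∘ₗ (tmulT r aa ((1 : FA (I × ℕ)) ⊗ₜ[Kq] gen p))
      = ((RatFunc.X : Kq) ^ (-(pairB r aa (rootw p) (rootw i0)))) •
        ((LinearMap.mulLeft Kq (gen p)) ∘ₗ (Pleft L (gen i0))) := by
  apply (bFF (I × ℕ)).ext; intro s
  rw [LinearMap.comp_apply, tmulT_B_basis, map_smul, bFF_apply, Pleft_tmul,
    LinearMap.smul_apply, LinearMap.comp_apply, bFF_apply, Pleft_tmul,
    LinearMap.mulLeft_apply, L_bF_gen r aa i0 δd hδ τ L hL]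
  by_cases hs : s.1 = FreeMonoid.of i0
  · rw [if_pos hs, hs, degw_of, mul_smul_comm, gen_mul_bF]
  · rw [if_neg hs]
    simp

include hL hδ in
lemma comp_Pr_A (p : I × ℕ) :
    (Pright L (gen i0)) ∘ₗ (tmulT r aa (gen p ⊗ₜ[Kq] (1 : FA (I × ℕ))))
      = (LinearMap.mulLeft Kq (gen p)) ∘ₗ (Pright L (gen i0)) := by
  apply (bFF (I × ℕ)).ext; intro s
  rw [LinearMap.comp_apply, tmulT_A_basis, bFF_apply, Pright_tmul,
    LinearMap.comp_apply, bFF_apply, Pright_tmul, LinearMap.mulLeft_apply,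
    mul_smul_comm, gen_mul_bF]

include hL hδ in
lemma comp_Pr_B (p : I × ℕ) :
    (Pright L (gen i0)) ∘ₗ (tmulT r aa ((1 : FA (I × ℕ)) ⊗ₜ[Kq] gen p))
      = if p = i0 then τ i0 • (Rw r aa i0) else 0 := by
  apply (bFF (I × ℕ)).ext; intro s
  rw [LinearMap.comp_apply, tmulT_B_basis, map_smul, bFF_apply, Pright_tmul,
    L_bF_gen r aa i0 δd hδ τ L hL]
  by_cases hp : p = i0
  · subst hp
    rw [if_pos rfl, LinearMap.smul_apply, Rw_basis]
    by_cases hs : s.2 = 1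
    · rw [if_pos ((of_mul_eq_of_iff p p s.2).mpr ⟨rfl, hs⟩), if_pos hs,
        smul_smul, smul_smul, mul_comm]
    · rw [if_neg (fun h => hs ((of_mul_eq_of_iff p p s.2).mp h).2), if_neg hs]
      simp
  · rw [if_neg (fun h => hp ((of_mul_eq_of_iff p i0 s.2).mp h).1), if_neg hp]
    simp

/-! ### the three basis inductions -/

include hδ in
lemma Eps_delta (m : FreeMonoid (I × ℕ)) : Eε (I × ℕ) (δd (bF (I × ℕ) m)) = bF (I × ℕ) m := by
  induction m using FreeMonoid.inductionOn' with
  | one => rw [bF_one, hδ.1, Eε_tmul, εF_one, one_smul]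
  | of_mul p m' ih =>
    rw [← gen_mul_bF, hδ.2.2, hδ.2.1, map_add, LinearMap.add_apply, map_add]
    have e1 := LinearMap.congr_fun (comp_Eps_A r aa δd hδ p) (δd (bF (I × ℕ) m'))
    have e2 := LinearMap.congr_fun (comp_Eps_B r aa δd hδ p) (δd (bF (I × ℕ) m'))
    rw [LinearMap.comp_apply] at e1 e2
    rw [e1, e2, LinearMap.comp_apply, LinearMap.mulLeft_apply, ih, LinearMap.zero_apply,
      zero_add, gen_mul_bF]

include hδ in
lemma Rw_delta (m : FreeMonoid (I × ℕ)) :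
    Rw r aa i0 (δd (bF (I × ℕ) m))
      = ((RatFunc.X : Kq) ^ (-(pairB r aa (rootw i0) (degw m)))) • bF (I × ℕ) m := by
  induction m using FreeMonoid.inductionOn' with
  | one =>
    rw [bF_one, hδ.1]
    have : ((1 : FA (I × ℕ)) ⊗ₜ[Kq] (1 : FA (I × ℕ))) = bFF (I × ℕ) (1, 1) := by
      rw [bFF_apply]; rfl
    rw [this, Rw_basis, if_pos rfl]
    rw [degw_one, pairB_zero_right, neg_zero, zpow_zero, one_smul, one_smul, bF_one]
  | of_mul p m' ih =>
    rw [← gen_mul_bF, hδ.2.2, hδ.2.1, map_add, LinearMap.add_apply, map_add]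
    have e1 := LinearMap.congr_fun (comp_Rw_A r aa i0 p) (δd (bF (I × ℕ) m'))
    have e2 := LinearMap.congr_fun (comp_Rw_B r aa i0 p) (δd (bF (I × ℕ) m'))
    rw [LinearMap.comp_apply] at e1 e2
    rw [e1, e2, LinearMap.zero_apply, add_zero, LinearMap.smul_apply, LinearMap.comp_apply,
      LinearMap.mulLeft_apply, ih]
    rw [degw_mul, degw_of, pairB_add_right, neg_add, zpow_add₀ RatFunc.X_ne_zero, mul_smul,
      mul_smul_comm, gen_mul_bF]

include hδ hL in
lemma Pl_delta (E' : FA (I × ℕ) →ₗ[Kq] FA (I × ℕ)) (hE' : IsEprime r aa i0 E')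
    (m : FreeMonoid (I × ℕ)) :
    Pleft L (gen i0) (δd (bF (I × ℕ) m)) = τ i0 • E' (bF (I × ℕ) m) := by
  induction m using FreeMonoid.inductionOn' with
  | one =>
    rw [bF_one, hδ.1, Pleft_tmul, hL.1 1 (gen i0), L_gen_one r aa δd hδ τ L hL i0,
      zero_smul, hE'.1, smul_zero]
  | of_mul p m' ih =>
    rw [← gen_mul_bF, hδ.2.2, hδ.2.1, map_add, LinearMap.add_apply, map_add]
    have e1 := LinearMap.congr_fun (comp_Pl_A r aa i0 δd hδ τ L hL p) (δd (bF (I × ℕ) m'))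
    have e2 := LinearMap.congr_fun (comp_Pl_B r aa i0 δd hδ τ L hL p) (δd (bF (I × ℕ) m'))
    rw [LinearMap.comp_apply] at e1 e2
    rw [e1, e2, LinearMap.smul_apply, LinearMap.comp_apply, LinearMap.mulLeft_apply, ih]
    rw [hE'.2.2 (rootw p) (degw m') (gen p) (bF (I × ℕ) m') (isHomog_gen p) (isHomog_bF m'),
      hE'.2.1]
    by_cases hp : p = i0
    · subst hp
      rw [if_pos rfl, if_pos rfl, LinearMap.smul_apply, Eps_delta r aa δd hδ m', one_mul]
      rw [smul_add, mul_smul_comm, smul_smul, smul_smul, mul_comm]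
    · rw [if_neg hp, if_neg hp, LinearMap.zero_apply, zero_add, zero_mul, zero_add]
      rw [mul_smul_comm, smul_smul, smul_smul, mul_comm]

include hδ hL in
lemma Pr_delta (hsym : ∀ i j, r i * aa i j = r j * aa j i)
    (E'' : FA (I × ℕ) →ₗ[Kq] FA (I × ℕ)) (hE'' : IsEdprime r aa i0 E'')
    (m : FreeMonoid (I × ℕ)) :
    Pright L (gen i0) (δd (bF (I × ℕ) m)) = τ i0 • E'' (bF (I × ℕ) m) := by
  induction m using FreeMonoid.inductionOn' with
  | one =>
    rw [bF_one, hδ.1, Pright_tmul, hL.1 1 (gen i0), L_gen_one r aa δd hδ τ L hL i0,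
      zero_smul, hE''.1, smul_zero]
  | of_mul p m' ih =>
    rw [← gen_mul_bF, hδ.2.2, hδ.2.1, map_add, LinearMap.add_apply, map_add]
    have e1 := LinearMap.congr_fun (comp_Pr_A r aa i0 δd hδ τ L hL p) (δd (bF (I × ℕ) m'))
    have e2 := LinearMap.congr_fun (comp_Pr_B r aa i0 δd hδ τ L hL p) (δd (bF (I × ℕ) m'))
    rw [LinearMap.comp_apply] at e1 e2
    rw [e1, e2, LinearMap.comp_apply, LinearMap.mulLeft_apply, ih]
    rw [hE''.2.2 (rootw p) (degw m') (gen p) (bF (I × ℕ) m') (isHomog_gen p) (isHomog_bF m'),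
      hE''.2.1]
    by_cases hp : p = i0
    · subst hp
      rw [if_pos rfl, if_pos rfl, LinearMap.smul_apply, Rw_delta r aa p δd hδ m', one_mul]
      rw [pairB_symm r aa hsym (degw m') (rootw p)]
      rw [smul_add, mul_smul_comm, add_comm]
    · rw [if_neg hp, if_neg hp, LinearMap.zero_apply, add_zero, zero_mul, smul_zero, zero_add,
        mul_smul_comm]

include hδ hL in
lemma Pl_delta_all (E' : FA (I × ℕ) →ₗ[Kq] FA (I × ℕ)) (hE' : IsEprime r aa i0 E')
    (x : FA (I × ℕ)) : Pleft L (gen i0) (δd x) = τ i0 • E' x := by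
  have h : (Pleft L (gen i0)).comp δd = τ i0 • E' := by
    apply (bF (I × ℕ)).ext; intro m
    rw [LinearMap.comp_apply, Pl_delta r aa i0 δd hδ τ L hL E' hE' m, LinearMap.smul_apply]
  have := LinearMap.congr_fun h x
  rwa [LinearMap.comp_apply, LinearMap.smul_apply] at this

include hδ hL in
lemma Pr_delta_all (hsym : ∀ i j, r i * aa i j = r j * aa j i)
    (E'' : FA (I × ℕ) →ₗ[Kq] FA (I × ℕ)) (hE'' : IsEdprime r aa i0 E'')
    (x : FA (I × ℕ)) : Pright L (gen i0) (δd x) = τ i0 • E'' x := by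
  have h : (Pright L (gen i0)).comp δd = τ i0 • E'' := by
    apply (bF (I × ℕ)).ext; intro m
    rw [LinearMap.comp_apply, Pr_delta r aa i0 δd hδ τ L hL hsym E'' hE'' m,
      LinearMap.smul_apply]
  have := LinearMap.congr_fun h x
  rwa [LinearMap.comp_apply, LinearMap.smul_apply] at this

lemma pairT_Pleft (g : FA (I × ℕ)) (z : FA (I × ℕ) ⊗[Kq] FA (I × ℕ)) (y : FA (I × ℕ)) :
    pairT L z (g ⊗ₜ[Kq] y) = L (Pleft L g z) y := by
  induction z using TensorProduct.induction_on with
  | zero => simp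
  | tmul a b => rw [pairT_tmul, Pleft_tmul, map_smul, LinearMap.smul_apply, smul_eq_mul]
  | add u v hu hv => simp [map_add, hu, hv]

lemma pairT_Pright (g : FA (I × ℕ)) (z : FA (I × ℕ) ⊗[Kq] FA (I × ℕ)) (y : FA (I × ℕ)) :
    pairT L z (y ⊗ₜ[Kq] g) = L (Pright L g z) y := by
  induction z using TensorProduct.induction_on with
  | zero => simp
  | tmul a b =>
    rw [pairT_tmul, Pright_tmul, map_smul, LinearMap.smul_apply, smul_eq_mul, mul_comm]
  | add u v hu hv => simp [map_add, hu, hv]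

include hδ hL in
lemma adjE' (E' : FA (I × ℕ) →ₗ[Kq] FA (I × ℕ)) (hE' : IsEprime r aa i0 E')
    (x y : FA (I × ℕ)) : L x (gen i0 * y) = τ i0 * L (E' x) y := by
  rw [hL.2.2.2.2 x (gen i0) y, LLb_eq_pairT, pairT_Pleft,
    Pl_delta_all r aa i0 δd hδ τ L hL E' hE' x, map_smul, LinearMap.smul_apply, smul_eq_mul]

include hδ hL in
lemma adjE'' (hsym : ∀ i j, r i * aa i j = r j * aa j i)
    (E'' : FA (I × ℕ) →ₗ[Kq] FA (I × ℕ)) (hE'' : IsEdprime r aa i0 E'')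
    (x y : FA (I × ℕ)) : L x (y * gen i0) = τ i0 * L (E'' x) y := by
  rw [hL.2.2.2.2 x y (gen i0), LLb_eq_pairT, pairT_Pright,
    Pr_delta_all r aa i0 δd hδ τ L hL hsym E'' hE'' x, map_smul, LinearMap.smul_apply,
    smul_eq_mul]

end RadMain

/-- The maps `e'_{il}` and `e''_{il}` preserve the radical of `(·,·)_L`. -/
theorem eprime_preserves_radical {I : Type} [DecidableEq I] (r : I → ℤ) (aa : I → I → ℤ)
    (hr : ∀ i, 0 < r i) (hsym : ∀ i j, r i * aa i j = r j * aa j i) (i0 : I × ℕ) (hl : 0 < i0.2)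
    (δd : FA (I × ℕ) →ₗ[Kq] (FA (I × ℕ) ⊗[Kq] FA (I × ℕ))) (hδ : IsCoprod r aa δd)
    (τ : I × ℕ → Kq) (hτ : ∀ p, τ p ≠ 0)
    (L : FA (I × ℕ) →ₗ[Kq] FA (I × ℕ) →ₗ[Kq] Kq) (hL : IsLform r aa τ δd L)
    (E' : FA (I × ℕ) →ₗ[Kq] FA (I × ℕ)) (hE' : IsEprime r aa i0 E')
    (E'' : FA (I × ℕ) →ₗ[Kq] FA (I × ℕ)) (hE'' : IsEdprime r aa i0 E'') :
    ∀ x : FA (I × ℕ), (∀ y, L x y = 0) →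
      (∀ y, L (E' x) y = 0) ∧ (∀ y, L (E'' x) y = 0) := by
  intro x hx
  constructor <;> intro y
  · have h := adjE' r aa i0 δd hδ τ L hL E' hE' x y
    rw [hx (gen i0 * y)] at h
    exact (mul_eq_zero.mp h.symm).resolve_left (hτ i0)
  · have h := adjE'' r aa i0 δd hδ τ L hL hsym E'' hE'' x y
    rw [hx (y * gen i0)] at h
    exact (mul_eq_zero.mp h.symm).resolve_left (hτ i0)

end
end

section
/- For i a real index and (j,l) ∈ I^∞ with i ≠ (j,l), the element R = Σ_{p+p'=1-la_{ij}} (-1)^p t_i^{(p)} t_{jl} t_i^{(p')} satisfies e''_i(R) = 0, where e''_i = e''_{i,1}. -/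
noncomputable section
open scoped TensorProduct

/-- The quantum integer `[m]_i = (q_i^m - q_i^{-m})/(q_i - q_i^{-1})`, `q_i = q^{r_i}`. -/
def qintK (rz : ℤ) (m : ℕ) : Kq :=
  ((RatFunc.X : Kq) ^ (rz * m) - (RatFunc.X : Kq) ^ (-(rz * m))) /
    ((RatFunc.X : Kq) ^ rz - (RatFunc.X : Kq) ^ (-rz))

/-- The quantum factorial `[n]_i!`. -/
def qfactK (rz : ℤ) (n : ℕ) : Kq := ∏ k ∈ Finset.range n, qintK rz (k + 1)


/-! ### Auxiliary lemmas -/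

lemma X_pow_ne_one (n : ℕ) (hn : n ≠ 0) : (RatFunc.X : Kq)^n ≠ 1 := by
  intro h
  have : (Polynomial.X : Polynomial ℚ)^n = 1 := by
    apply RatFunc.algebraMap_injective ℚ
    simpa [map_pow, RatFunc.algebraMap_X] using h
  have := congrArg Polynomial.natDegree this
  simp [Polynomial.natDegree_X_pow] at this
  exact hn this

lemma X_zpow_ne_one (b : ℤ) (hb : b ≠ 0) : (RatFunc.X : Kq)^b ≠ 1 := by
  have hX : (RatFunc.X : Kq) ≠ 0 := RatFunc.X_ne_zero
  rcases lt_or_gt_of_ne hb with h | h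
  · intro he
    have : (RatFunc.X : Kq)^(-b) = 1 := by
      rw [zpow_neg, he, inv_one]
    rw [show -b = ((-b).toNat : ℤ) by omega, zpow_natCast] at this
    exact X_pow_ne_one _ (by omega) this
  · rw [show b = (b.toNat : ℤ) by omega, zpow_natCast]
    exact X_pow_ne_one _ (by omega)

lemma X_zpow_sub_ne (a : ℤ) (ha : a ≠ 0) : (RatFunc.X : Kq)^a - (RatFunc.X:Kq)^(-a) ≠ 0 := by
  have hX : (RatFunc.X : Kq) ≠ 0 := RatFunc.X_ne_zero
  intro h
  have he : (RatFunc.X : Kq)^a = (RatFunc.X:Kq)^(-a) := sub_eq_zero.mp h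
  have : (RatFunc.X : Kq)^(a - -a) = 1 := by
    rw [zpow_sub₀ hX, he, div_self (zpow_ne_zero _ hX)]
  exact X_zpow_ne_one _ (by omega) this

/-- `q_i^{-(n-1)}[n]_i` as a geometric sum. -/
def cpow (rz : ℤ) (n : ℕ) : Kq := ∑ k ∈ Finset.range n, (RatFunc.X : Kq) ^ (-(2 * rz * k))

lemma cpow_zero' (rz : ℤ) : cpow rz 0 = 0 := by simp [cpow]

lemma cpow_succ' (rz : ℤ) (n : ℕ) :
    cpow rz (n+1) = cpow rz n + (RatFunc.X : Kq) ^ (-(2 * rz * n)) := by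
  simp [cpow, Finset.sum_range_succ]

lemma qint_eq (rz : ℤ) (hrz : rz ≠ 0) (n : ℕ) :
    qintK rz n = (RatFunc.X : Kq) ^ (rz * ((n:ℤ) - 1)) * cpow rz n := by
  have hX : (RatFunc.X : Kq) ≠ 0 := RatFunc.X_ne_zero
  have hden := X_zpow_sub_ne rz hrz
  set g : ℕ → Kq := fun k => (RatFunc.X : Kq) ^ (rz * ((n:ℤ) - 2 * k)) with hg
  rw [qintK, div_eq_iff hden, cpow, Finset.mul_sum, Finset.sum_mul]
  have hterm : ∀ k ∈ Finset.range n,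
      (RatFunc.X : Kq) ^ (rz * ((n:ℤ) - 1)) * (RatFunc.X : Kq) ^ (-(2 * rz * k)) *
        ((RatFunc.X : Kq) ^ rz - (RatFunc.X : Kq) ^ (-rz))
      = g k - g (k + 1) := by
    intro k _
    rw [hg]
    simp only [mul_sub, ← zpow_add₀ hX]
    push_cast
    congr 2 <;> ring
  rw [Finset.sum_congr rfl hterm, Finset.sum_range_sub' g, hg]
  simp only []
  congr 2 <;> push_cast <;> ring

lemma qint_ne (rz : ℤ) (hrz : rz ≠ 0) (n : ℕ) (hn : n ≠ 0) : qintK rz n ≠ 0 := by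
  have hz : rz * (n:ℤ) ≠ 0 := by
    have : (n:ℤ) ≠ 0 := by exact_mod_cast hn
    exact mul_ne_zero hrz this
  exact div_ne_zero (X_zpow_sub_ne _ hz) (X_zpow_sub_ne rz hrz)

lemma cpow_ne (rz : ℤ) (hrz : rz ≠ 0) (n : ℕ) : cpow rz (n+1) ≠ 0 := by
  have h := qint_eq rz hrz (n+1)
  intro hc
  rw [hc, mul_zero] at h
  exact qint_ne rz hrz (n+1) (by omega) h

lemma qfact_ne (rz : ℤ) (hrz : rz ≠ 0) (n : ℕ) : qfactK rz n ≠ 0 := by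
  rw [qfactK]
  exact Finset.prod_ne_zero_iff.mpr fun k _ => qint_ne rz hrz (k+1) (by omega)

lemma key_lemma (rz : ℤ) (hrz : rz ≠ 0) (n : ℕ) :
    (qfactK rz (n+1))⁻¹ * cpow rz (n+1)
      = (RatFunc.X : Kq) ^ (-(rz * n)) * (qfactK rz n)⁻¹ := by
  have hX : (RatFunc.X : Kq) ≠ 0 := RatFunc.X_ne_zero
  have h1 : qfactK rz (n+1) = qfactK rz n * qintK rz (n+1) := Finset.prod_range_succ _ _
  have h2 : qintK rz (n+1) = (RatFunc.X : Kq) ^ (rz * n) * cpow rz (n+1) := by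
    rw [qint_eq rz hrz (n+1)]
    congr 1
    push_cast; ring_nf
  rw [h1, h2, mul_inv, mul_inv, mul_assoc, mul_assoc,
    inv_mul_cancel₀ (cpow_ne rz hrz n), mul_one, zpow_neg, mul_comm]

lemma scalar_cancel (rz : ℤ) (hrz : rz ≠ 0) (m p : ℕ) (hp : p ≤ m) :
    ((-1 : Kq)^(p+1) * (qfactK rz (p+1))⁻¹ * (qfactK rz (m - p))⁻¹) *
      ((RatFunc.X : Kq)^(rz * (m:ℤ) - 2 * rz * ((m - p : ℕ) : ℤ)) * cpow rz (p+1))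
    + ((-1 : Kq)^p * (qfactK rz p)⁻¹ * (qfactK rz (m - p + 1))⁻¹) * cpow rz (m - p + 1) = 0 := by
  have hX : (RatFunc.X : Kq) ≠ 0 := RatFunc.X_ne_zero
  set k := m - p with hk
  have hmk : (m : ℤ) = (p : ℤ) + (k : ℤ) := by omega
  have h1 := key_lemma rz hrz p
  have h2 := key_lemma rz hrz k
  have hxe : (RatFunc.X : Kq)^(rz * (m:ℤ) - 2 * rz * (k:ℤ)) * (RatFunc.X : Kq)^(-(rz * p))
      = (RatFunc.X : Kq)^(-(rz * k)) := by
    rw [← zpow_add₀ hX]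
    congr 1
    rw [hmk]; ring
  linear_combination ((-1 : Kq)^(p+1) * (qfactK rz k)⁻¹ *
      (RatFunc.X : Kq)^(rz * (m:ℤ) - 2 * rz * (k:ℤ))) * h1
    + ((-1 : Kq)^p * (qfactK rz p)⁻¹) * h2
    + ((-1 : Kq)^(p+1) * (qfactK rz k)⁻¹ * (qfactK rz p)⁻¹) * hxe

lemma aux_degw_mul {I : Type} (a b : FreeMonoid (I × ℕ)) : degw (a * b) = degw a + degw b := by
  simp [degw]

lemma aux_degw_of {I : Type} (p : I × ℕ) : degw (FreeMonoid.of p) = rootw p := by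
  simp [degw]

lemma aux_degw_pow {I : Type} (w : FreeMonoid (I × ℕ)) (n : ℕ) : degw (w ^ n) = n • degw w := by
  induction n with
  | zero => simp [degw]
  | succ n ih => rw [pow_succ, aux_degw_mul, ih, add_smul, one_smul]

lemma aux_homog {I : Type} (w : FreeMonoid (I × ℕ)) :
    IsHomog (degw w) (MonoidAlgebra.of Kq (FreeMonoid (I × ℕ)) w) := by
  intro m hm
  have : m = w := by
    simpa [MonoidAlgebra.of_apply, Finsupp.support_single_ne_zero w one_ne_zero] using hm
  rw [this]

lemma aux_pairB {I : Type} (r : I → ℤ) (aa : I → I → ℤ) (a b : I) (x y : ℤ) :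
    pairB r aa (Finsupp.single a x) (Finsupp.single b y) = x * y * (r a * aa a b) := by
  classical
  simp [pairB, Finsupp.sum_single_index]

/-- For a real index `i` and `(j,l) ≠ (i,1)`, the Serre element
`R = ∑_{p+p'=1-la_{ij}} (-1)^p t_i^{(p)} t_{jl} t_i^{(p')}` satisfies `e''_i(R) = 0`
(here `m' = -l·a_{ij}`, so `1 - l·a_{ij} = m' + 1`). -/
theorem edprime_serre_element {I : Type} [DecidableEq I] (r : I → ℤ) (aa : I → I → ℤ)
    (hr : ∀ i, 0 < r i) (hsym : ∀ i j, r i * aa i j = r j * aa j i) (i j : I) (l : ℕ) (hl : 0 < l)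
    (hreal : aa i i = 2) (hne : (i, 1) ≠ (j, l))
    (m' : ℕ) (hm : (m' : ℤ) = -(l * aa i j))
    (E'' : FA (I × ℕ) →ₗ[Kq] FA (I × ℕ)) (hE'' : IsEdprime r aa (i, 1) E'') :
    E'' (∑ p ∈ Finset.range (m' + 2),
        ((-1 : Kq) ^ p * (qfactK (r i) p)⁻¹ * (qfactK (r i) (m' + 1 - p))⁻¹) •
          (gen (i, 1) ^ p * gen (j, l) * gen (i, 1) ^ (m' + 1 - p))) = 0 := by
  classical
  obtain ⟨hE1, hEgen, hErule⟩ := hE''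
  have hX : (RatFunc.X : Kq) ≠ 0 := RatFunc.X_ne_zero
  have hri : r i ≠ 0 := (hr i).ne'
  set wi : FreeMonoid (I × ℕ) := FreeMonoid.of (i, 1) with hwi
  set wj : FreeMonoid (I × ℕ) := FreeMonoid.of (j, l) with hwj
  have hgi : gen ((i,1) : I × ℕ) = MonoidAlgebra.of Kq (FreeMonoid (I × ℕ)) wi := rfl
  have hgj : gen ((j,l) : I × ℕ) = MonoidAlgebra.of Kq (FreeMonoid (I × ℕ)) wj := rfl
  have hEti : E'' (gen ((i,1) : I × ℕ)) = 1 := by rw [hEgen, if_pos rfl]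
  have hEtj : E'' (gen ((j,l) : I × ℕ)) = 0 := by
    rw [hEgen, if_neg (fun h => hne h.symm)]
  have hdi : ∀ n : ℕ, degw (wi ^ n) = Finsupp.single i (-(n:ℤ)) := by
    intro n
    rw [aux_degw_pow, hwi, aux_degw_of, rootw]
    simp [Finsupp.smul_single]
  have hdj : degw wj = Finsupp.single j (-(l:ℤ)) := by
    rw [hwj, aux_degw_of, rootw]
  have hrw : rootw ((i,1) : I × ℕ) = Finsupp.single i (-1 : ℤ) := by norm_num [rootw]
  have hp1 : ∀ n : ℕ, pairB r aa (degw (wi ^ n)) (rootw ((i,1) : I × ℕ)) = 2 * r i * n := by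
    intro n
    rw [hdi, hrw, aux_pairB, hreal]
    ring
  have hp2 : pairB r aa (degw wj) (rootw ((i,1) : I × ℕ)) = -(r i * (m':ℤ)) := by
    rw [hdj, hrw, aux_pairB]
    have h := hsym j i
    linear_combination (l : ℤ) * h + (r i) * hm
  have hhi : ∀ n : ℕ, IsHomog (degw (wi ^ n)) (gen ((i,1) : I × ℕ) ^ n) := by
    intro n
    have h : gen ((i,1) : I × ℕ) ^ n = MonoidAlgebra.of Kq (FreeMonoid (I × ℕ)) (wi ^ n) := by
      rw [hgi, map_pow]
    rw [h]; exact aux_homog _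
  have hhj : IsHomog (degw wj) (gen ((j,l) : I × ℕ)) := by rw [hgj]; exact aux_homog _
  have hhij : ∀ n : ℕ, IsHomog (degw (wi ^ n * wj))
      (gen ((i,1) : I × ℕ) ^ n * gen ((j,l) : I × ℕ)) := by
    intro n
    have h : gen ((i,1) : I × ℕ) ^ n * gen ((j,l) : I × ℕ)
        = MonoidAlgebra.of Kq (FreeMonoid (I × ℕ)) (wi ^ n * wj) := by
      rw [hgi, hgj, map_mul, map_pow]
    rw [h]; exact aux_homog _
  have hgen1 : IsHomog (degw wi) (gen ((i,1) : I × ℕ)) := by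
    simpa using hhi 1
  have hpow1 : ∀ n : ℕ, E'' (gen ((i,1) : I × ℕ) ^ (n+1))
      = cpow (r i) (n+1) • gen ((i,1) : I × ℕ) ^ n := by
    intro n
    induction n with
    | zero =>
      simp [hEti, cpow_succ', cpow_zero']
    | succ n ih =>
      have hstep := hErule _ _ (gen ((i,1) : I × ℕ)) (gen ((i,1) : I × ℕ) ^ (n+1))
        hgen1 (hhi (n+1))
      rw [← pow_succ'] at hstep
      rw [hstep, hEti, one_mul, ih, hp1 (n+1), mul_smul_comm, ← pow_succ',
        cpow_succ' (r i) (n+1), add_smul, add_comm]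
  have hpow : ∀ n : ℕ, E'' (gen ((i,1) : I × ℕ) ^ n)
      = cpow (r i) n • gen ((i,1) : I × ℕ) ^ (n - 1) := by
    intro n
    cases n with
    | zero => simpa [cpow_zero'] using hE1
    | succ n => simpa using hpow1 n
  have hterm : ∀ p p' : ℕ,
      E'' (gen ((i,1) : I × ℕ) ^ p * gen ((j,l) : I × ℕ) * gen ((i,1) : I × ℕ) ^ p')
      = ((RatFunc.X : Kq) ^ (r i * (m':ℤ) - 2 * r i * (p':ℤ)) * cpow (r i) p) •
          (gen ((i,1) : I × ℕ) ^ (p-1) * gen ((j,l) : I × ℕ) * gen ((i,1) : I × ℕ) ^ p')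
        + cpow (r i) p' •
          (gen ((i,1) : I × ℕ) ^ p * gen ((j,l) : I × ℕ) * gen ((i,1) : I × ℕ) ^ (p'-1)) := by
    intro p p'
    have hstep2 := hErule _ _ (gen ((i,1) : I × ℕ) ^ p) (gen ((j,l) : I × ℕ)) (hhi p) hhj
    rw [hp2, neg_neg, hEtj, mul_zero, add_zero, hpow p] at hstep2
    have hstep1 := hErule _ _ (gen ((i,1) : I × ℕ) ^ p * gen ((j,l) : I × ℕ))
      (gen ((i,1) : I × ℕ) ^ p') (hhij p) (hhi p')
    rw [hp1 p', hstep2, hpow p'] at hstep1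
    rw [hstep1]
    simp only [smul_mul_assoc, mul_smul_comm, smul_smul]
    congr 2
    rw [← mul_assoc, ← zpow_add₀ hX]
    congr 2
    ring
  rw [map_sum]
  set f : ℕ → FA (I × ℕ) := fun p =>
    (((-1 : Kq) ^ p * (qfactK (r i) p)⁻¹ * (qfactK (r i) (m' + 1 - p))⁻¹) *
        ((RatFunc.X : Kq) ^ (r i * (m':ℤ) - 2 * r i * ((m' + 1 - p : ℕ) : ℤ)) * cpow (r i) p)) •
      (gen ((i,1) : I × ℕ) ^ (p-1) * gen ((j,l) : I × ℕ) * gen ((i,1) : I × ℕ) ^ (m' + 1 - p))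
    with hf
  set g : ℕ → FA (I × ℕ) := fun p =>
    (((-1 : Kq) ^ p * (qfactK (r i) p)⁻¹ * (qfactK (r i) (m' + 1 - p))⁻¹) *
        cpow (r i) (m' + 1 - p)) •
      (gen ((i,1) : I × ℕ) ^ p * gen ((j,l) : I × ℕ) * gen ((i,1) : I × ℕ) ^ (m' + 1 - p - 1))
    with hg
  have hsummand : ∀ p ∈ Finset.range (m' + 2),
      E'' (((-1 : Kq) ^ p * (qfactK (r i) p)⁻¹ * (qfactK (r i) (m' + 1 - p))⁻¹) •
          (gen ((i,1) : I × ℕ) ^ p * gen ((j,l) : I × ℕ) * gen ((i,1) : I × ℕ) ^ (m' + 1 - p)))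
      = f p + g p := by
    intro p _
    rw [map_smul, hterm p (m' + 1 - p), smul_add, smul_smul, smul_smul, hf, hg]
  rw [Finset.sum_congr rfl hsummand]
  have hf0 : f 0 = 0 := by
    rw [hf]
    simp [cpow_zero']
  have hglast : g (m' + 1) = 0 := by
    rw [hg]
    simp [cpow_zero']
  have hcancel : ∀ p ∈ Finset.range (m' + 1), f (p + 1) + g p = 0 := by
    intro p hp
    have hple : p ≤ m' := by
      simp only [Finset.mem_range] at hp; omega
    rw [hf, hg]
    simp only []
    rw [show m' + 1 - (p + 1) = m' - p from by omega,
      show m' + 1 - p - 1 = m' - p from by omega,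
      show m' + 1 - p = m' - p + 1 from by omega,
      Nat.add_sub_cancel]
    rw [← add_smul, scalar_cancel (r i) hri m' p hple, zero_smul]
  calc ∑ p ∈ Finset.range (m' + 2), (f p + g p)
      = ∑ p ∈ Finset.range (m' + 2), f p + ∑ p ∈ Finset.range (m' + 2), g p :=
        Finset.sum_add_distrib
    _ = (∑ p ∈ Finset.range (m' + 1), f (p + 1) + f 0)
        + (∑ p ∈ Finset.range (m' + 1), g p + g (m' + 1)) := by
        rw [Finset.sum_range_succ' f (m' + 1), Finset.sum_range_succ g (m' + 1)]
    _ = ∑ p ∈ Finset.range (m' + 1), (f (p + 1) + g p) := by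
        rw [hf0, hglast, add_zero, add_zero, ← Finset.sum_add_distrib]
    _ = 0 := Finset.sum_eq_zero hcancel

end
end

section
/- In any ℚ(q)-algebra containing elements K (invertible, central among the relevant elements as specified), e_n, f_n (n ≥ 0, e₀ = f₀ = 1) and scalars ν_n ∈ ℚ(q) satisfying, for each n ≥ 1, Σ_{p=0}^{n} ν_p K^{-p} e_{n-p} f_{n-p} = Σ_{p=0}^{n} ν_p K^{p} f_{n-p} e_{n-p} (with ν₀ = 1), one has e_n f_n - f_n e_n = Σ_{p=1}^{n} ( Σ_{r=1}^{p} ν_r θ_{p-r} K^{r-p}(K^r - K^{-r}) ) f_{n-p} e_{n-p}, where θ_m = Σ_{c ∈ C_m} (-1)^{||c||} ν_c, the sum over compositions c = (c₁,…,c_d) of m, with ν_c = ∏ ν_{c_k} and ||c|| = d (and θ₀ = 1). -/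
open scoped BigOperators

/-- The signed composition sum `θ_m = ∑_{c ∈ C_m} (-1)^{‖c‖} ν_c` (so `θ₀ = 1`). -/
noncomputable def compTheta (ν : ℕ → RatFunc ℚ) (m : ℕ) : RatFunc ℚ :=
  ∑ c : Composition m, (-1 : RatFunc ℚ) ^ c.length * (c.blocks.map ν).prod

/-!
Work in `R⟦X⟧` with `N = ∑ ν_p Kinv^p X^p`, `M = ∑ ν_p K^p X^p` and `Θ = ∑ θ_m Kinv^m X^m`.
The hypothesis says `N · ∑ e_m f_m X^m = M · ∑ f_m e_m X^m`. Splitting off the first block of a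
composition gives `(∑ θ_m X^m) (∑ ν_p X^p) = 1` over `ℚ(q)`, and the substitution `X ↦ Kinv X`
is a ring map into `R⟦X⟧` because `Kinv` commutes with scalars, so `Θ N = 1`. Hence
`∑ (e_m f_m - f_m e_m) X^m = Θ (M - N) · ∑ f_m e_m X^m`, whose coefficient of `X^n` is the claim.
-/

open Finset PowerSeries

namespace Composition

def cons {m : ℕ} (r : Fin m) (c : Composition (m - (r + 1))) : Composition m where
  blocks := (r + 1) :: c.blocks
  blocks_pos := by
    rintro i (_ | ⟨_, hi⟩)
    exacts [Nat.succ_pos _, c.blocks_pos hi]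
  blocks_sum := by
    simp only [List.sum_cons, c.blocks_sum]
    omega

theorem cons_bijective {m : ℕ} (hm : 0 < m) :
    Function.Bijective fun x : Σ r : Fin m, Composition (m - (r + 1)) => cons x.1 x.2 := by
  constructor
  · rintro ⟨r, c⟩ ⟨r', c'⟩ h
    dsimp only at h
    obtain ⟨hr, hc⟩ := List.cons_eq_cons.1 (congrArg blocks h)
    obtain rfl : r = r' := Fin.ext (by omega)
    rw [Sigma.mk.inj_iff]
    exact ⟨rfl, heq_of_eq (Composition.ext hc)⟩
  · intro c
    obtain ⟨b, t, hbt⟩ := List.exists_cons_of_ne_nil (mt c.blocks_eq_nil.1 hm.ne')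
    have hb : 0 < b := c.blocks_pos (by simp [hbt])
    have hsum : b + t.sum = m := by simpa [hbt] using c.blocks_sum
    refine ⟨⟨⟨b - 1, by omega⟩,
      ⟨t, fun hi => c.blocks_pos (by simp [hbt, hi]), by simp; omega⟩⟩, ?_⟩
    apply Composition.ext
    simp only [cons, hbt, List.cons.injEq, and_true]
    omega

end Composition

section compTheta

variable (ν : ℕ → RatFunc ℚ)

theorem compTheta_zero : compTheta ν 0 = 1 := by
  have : Subsingleton (Composition 0) :=
    ⟨fun a b => Composition.ext ((a.blocks_eq_nil.2 rfl).trans (b.blocks_eq_nil.2 rfl).symm)⟩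
  rw [compTheta, Fintype.sum_subsingleton _ (Composition.ones 0)]
  simp

theorem compTheta_eq_neg_sum {m : ℕ} (hm : 0 < m) :
    compTheta ν m = -∑ r : Fin m, ν (r + 1) * compTheta ν (m - (r + 1)) := by
  rw [compTheta, ← Fintype.sum_bijective _ (Composition.cons_bijective hm) _ _ fun _ => rfl,
    Fintype.sum_sigma, ← sum_neg_distrib]
  refine sum_congr rfl fun r _ => ?_
  simp only [Composition.cons, Composition.length, List.length_cons, List.map_cons,
    List.prod_cons, compTheta, mul_sum, pow_succ, ← sum_neg_distrib]
  refine sum_congr rfl fun c _ => ?_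
  ring

theorem mk_compTheta_mul_mk (hν0 : ν 0 = 1) : mk (compTheta ν) * mk ν = 1 := by
  ext n
  rw [coeff_mul, ← Nat.sum_antidiagonal_swap]
  simp only [Prod.fst_swap, Prod.snd_swap]
  rw [Nat.sum_antidiagonal_eq_sum_range_succ
    (fun i j => coeff j (mk (compTheta ν)) * coeff i (mk ν)), sum_range_succ']
  simp only [coeff_mk, Nat.sub_zero, coeff_one]
  rcases n.eq_zero_or_pos with rfl | hn
  · simp [compTheta_zero, hν0]
  · rw [compTheta_eq_neg_sum ν hn,
      Fin.sum_univ_eq_sum_range fun r => ν (r + 1) * compTheta ν (n - (r + 1))]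
    simp [hν0, hn.ne', mul_comm]

end compTheta

theorem Finset.Nat.sum_antidiagonal_eq_sum_Icc {M : Type*} [AddCommMonoid M] (g : ℕ → ℕ → M)
    (hg : ∀ j, g 0 j = 0) (n : ℕ) :
    ∑ ij ∈ antidiagonal n, g ij.1 ij.2 = ∑ p ∈ Icc 1 n, g p (n - p) := by
  rw [Nat.sum_antidiagonal_eq_sum_range_succ, range_eq_Ico,
    sum_eq_sum_Ico_succ_bot n.succ_pos, hg, zero_add]
  rfl

namespace PowerSeries

section Semiring

variable {R : Type*} [Semiring R]

theorem coeff_mul_eq_sum_Icc_of_coeff_zero_left {φ : R⟦X⟧} (hφ : coeff 0 φ = 0)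
    (ψ : R⟦X⟧) (n : ℕ) : coeff n (φ * ψ) = ∑ p ∈ Icc 1 n, coeff p φ * coeff (n - p) ψ := by
  rw [coeff_mul, Nat.sum_antidiagonal_eq_sum_Icc (fun i j => coeff i φ * coeff j ψ)]
  simp [hφ]

theorem coeff_mul_eq_sum_Icc_of_coeff_zero_right (φ : R⟦X⟧) {ψ : R⟦X⟧}
    (hψ : coeff 0 ψ = 0) (n : ℕ) :
    coeff n (φ * ψ) = ∑ p ∈ Icc 1 n, coeff (n - p) φ * coeff p ψ := by
  rw [coeff_mul, ← Nat.sum_antidiagonal_swap]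
  simp only [Prod.fst_swap, Prod.snd_swap]
  rw [Nat.sum_antidiagonal_eq_sum_Icc (fun i j => coeff j φ * coeff i ψ)]
  simp [hψ]

variable {S : Type*} [CommSemiring S] [Algebra S R]

/-- The substitution `f(X) ↦ f(k X)`, for `k` in an `S`-algebra that need not be commutative. -/
noncomputable def algebraRescale (k : R) : S⟦X⟧ →+* R⟦X⟧ :=
  (map (Polynomial.aeval k).toRingHom).comp ((rescale Polynomial.X).comp (map Polynomial.C))

theorem coeff_algebraRescale (k : R) (f : S⟦X⟧) (n : ℕ) :
    coeff n (algebraRescale k f) = coeff n f • k ^ n := by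
  simp [algebraRescale, coeff_rescale, Algebra.smul_def, Algebra.commutes]

@[simp]
theorem constantCoeff_algebraRescale (k : R) (f : S⟦X⟧) :
    constantCoeff (algebraRescale k f) = algebraMap S R (constantCoeff f) := by
  rw [← coeff_zero_eq_constantCoeff_apply, ← coeff_zero_eq_constantCoeff_apply,
    coeff_algebraRescale, pow_zero, Algebra.algebraMap_eq_smul_one]

end Semiring

variable {S R : Type*} [CommSemiring S] [Ring R] [Algebra S R]

theorem coeff_zero_algebraRescale_sub (k l : R) (f : S⟦X⟧) :
    coeff 0 (algebraRescale k f - algebraRescale l f) = 0 := by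
  simp

theorem coeff_algebraRescale_mul_algebraRescale_sub (k l : R) (θ ν : ℕ → S) (p : ℕ) :
    coeff p (algebraRescale l (mk θ) * (algebraRescale k (mk ν) - algebraRescale l (mk ν))) =
      ∑ r ∈ Icc 1 p, (ν r * θ (p - r)) • (l ^ (p - r) * (k ^ r - l ^ r)) := by
  rw [coeff_mul_eq_sum_Icc_of_coeff_zero_right _ (coeff_zero_algebraRescale_sub k l _)]
  refine sum_congr rfl fun r _ => ?_
  simp only [map_sub, coeff_algebraRescale, coeff_mk, smul_mul_smul, ← smul_sub, mul_comm (θ _)]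

end PowerSeries

theorem commutation_equal_case_general (R : Type*) [Ring R] [Algebra (RatFunc ℚ) R]
    (K Kinv : R) (e f : ℕ → R) (ν : ℕ → RatFunc ℚ)
    (he0 : e 0 = 1) (hf0 : f 0 = 1) (hν0 : ν 0 = 1)
    (hrel : ∀ n : ℕ, 1 ≤ n →
      ∑ p ∈ Finset.range (n + 1), ν p • (Kinv ^ p * (e (n - p) * f (n - p))) =
      ∑ p ∈ Finset.range (n + 1), ν p • (K ^ p * (f (n - p) * e (n - p)))) :
    ∀ n : ℕ, 1 ≤ n →
      e n * f n - f n * e n =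
        ∑ p ∈ Finset.Icc 1 n,
          (∑ r ∈ Finset.Icc 1 p,
              (ν r * compTheta ν (p - r)) • (Kinv ^ (p - r) * (K ^ r - Kinv ^ r))) *
            (f (n - p) * e (n - p)) := by
  intro n _
  set N := algebraRescale Kinv (mk ν)
  set M := algebraRescale K (mk ν)
  set Θ := algebraRescale Kinv (mk (compTheta ν))
  have hΘN : Θ * N = 1 := by rw [← map_mul, mk_compTheta_mul_mk ν hν0, map_one]
  have hrel' : N * mk (fun m => e m * f m) = M * mk (fun m => f m * e m) := by
    ext m
    rcases m.eq_zero_or_pos with rfl | hm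
    · simp [he0, hf0, N, M]
    · rw [coeff_mul, coeff_mul,
        Nat.sum_antidiagonal_eq_sum_range_succ fun i j => coeff i N * coeff j (mk _),
        Nat.sum_antidiagonal_eq_sum_range_succ fun i j => coeff i M * coeff j (mk _)]
      simpa [N, M, coeff_algebraRescale, smul_mul_assoc] using hrel m hm
  have hcomm : mk (fun m => e m * f m - f m * e m) = Θ * (M - N) * mk (fun m => f m * e m) :=
    calc mk (fun m => e m * f m - f m * e m)
        = Θ * N * (mk (fun m => e m * f m) - mk (fun m => f m * e m)) := by
          rw [hΘN, one_mul]; ext; simp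
      _ = Θ * (M - N) * mk (fun m => f m * e m) := by
          rw [mul_assoc, mul_sub, hrel', ← sub_mul, mul_assoc]
  have hcoeff := congrArg (coeff n) hcomm
  rw [coeff_mk, coeff_mul_eq_sum_Icc_of_coeff_zero_left (by simp [Θ, M, N])] at hcoeff
  simp only [hcoeff, Θ, M, N, coeff_algebraRescale_mul_algebraRescale_sub, coeff_mk]

/-- In a `ℚ(q)`-algebra with an invertible element `K` (commuting with the products
`f_m e_m`), elements `e_n, f_n` (`e₀ = f₀ = 1`) and scalars `ν_n` (`ν₀ = 1`) satisfying
`∑_{p=0}^n ν_p K^{-p} e_{n-p} f_{n-p} = ∑_{p=0}^n ν_p K^p f_{n-p} e_{n-p}` for all `n ≥ 1`,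
one has
`e_n f_n - f_n e_n = ∑_{p=1}^n (∑_{r=1}^p ν_r θ_{p-r} K^{r-p}(K^r - K^{-r})) f_{n-p} e_{n-p}`. -/
theorem commutation_equal_case (R : Type*) [Ring R] [Algebra (RatFunc ℚ) R]
    (K Kinv : R) (e f : ℕ → R) (ν : ℕ → RatFunc ℚ)
    (hK : K * Kinv = 1) (hK' : Kinv * K = 1)
    (he0 : e 0 = 1) (hf0 : f 0 = 1) (hν0 : ν 0 = 1)
    (hcommK : ∀ m, K * (f m * e m) = (f m * e m) * K)
    (hcommKinv : ∀ m, Kinv * (f m * e m) = (f m * e m) * Kinv)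
    (hrel : ∀ n : ℕ, 1 ≤ n →
      ∑ p ∈ Finset.range (n + 1), ν p • (Kinv ^ p * (e (n - p) * f (n - p))) =
      ∑ p ∈ Finset.range (n + 1), ν p • (K ^ p * (f (n - p) * e (n - p)))) :
    ∀ n : ℕ, 1 ≤ n →
      e n * f n - f n * e n =
        ∑ p ∈ Finset.Icc 1 n,
          (∑ r ∈ Finset.Icc 1 p,
              (ν r * compTheta ν (p - r)) • (Kinv ^ (p - r) * (K ^ r - Kinv ^ r))) *
            (f (n - p) * e (n - p)) :=
  commutation_equal_case_general R K Kinv e f ν he0 hf0 hν0 hrel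
end

section
/- In a ring with invertible element K and scalars satisfying the hypotheses, the identities (q^h; 0)_q := (q^h - 1)/(q - 1) satisfy: (q^h; n)_q = qⁿ(q^h; 0)_q + (qⁿ - 1)/(q - 1), and (K^l - K^{-l})/(q_i² - 1) = ((q-1)/(q_i²-1)) · (1 + K^{-l}) · (K^l - 1)/(q - 1). Consequently, both (q^h; n)_q and (K_i^l - K_i^{-l})/(q_i² - 1) lie in the A₁-subalgebra generated by q^h, q^{-h}, and (q^h; 0)_q over A₁ = ℚ[q]_{(q-1)}. -/
noncomputable section

/-- `q`, as an element of `ℚ(q)`. -/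
def q1 : RatFunc ℚ := RatFunc.X

/-- `A₁ = ℚ[q]_{(q-1)}`, realized as the set of rational functions `g/h` with `h(1) ≠ 0`. -/
def A1set : Set (RatFunc ℚ) :=
  {f | ∃ g h : Polynomial ℚ, h.eval 1 ≠ 0 ∧
    f * algebraMap (Polynomial ℚ) (RatFunc ℚ) h = algebraMap (Polynomial ℚ) (RatFunc ℚ) g}

/-
Both identities are ring computations: `(u x - 1) c = x (u - 1) c + (x - 1) c` and
`K - K⁻¹ = (1 + K⁻¹)(K - 1)`. For the memberships: a subring containing a unit `v`, its
inverse and `(v - 1) c` contains every `(vᵐ - 1) c` with `m ∈ ℤ`, because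
`(v^{m+1} - 1) c = v (vᵐ - 1) c + (v - 1) c` and `(v^{m-1} - 1) c = v⁻¹ ((vᵐ - 1) c - (v - 1) c)`;
apply this to `v = q^h` and to `v = q`. Finally `(q - 1)/(q^{2r} - 1)` is the inverse of
`1 + q + ⋯ + q^{2r-1}`, which takes the value `2r ≠ 0` at `q = 1`, so it lies in `A₁`.
-/

open Polynomial

lemma q1_eq_algebraMap_X : q1 = algebraMap ℚ[X] (RatFunc ℚ) X :=
  RatFunc.algebraMap_X.symm

lemma q1_ne_zero : q1 ≠ 0 := by
  rw [q1_eq_algebraMap_X]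
  exact RatFunc.algebraMap_ne_zero X_ne_zero

lemma q1_sub_one_ne_zero : q1 - 1 ≠ 0 := by
  rw [q1_eq_algebraMap_X, ← map_one (algebraMap ℚ[X] (RatFunc ℚ)), ← map_sub]
  exact RatFunc.algebraMap_ne_zero (X_sub_C_ne_zero 1)

lemma sub_one_mul_inv_q1_pow_sub_one (m : ℕ) :
    (q1 - 1) * (q1 ^ m - 1)⁻¹ = (algebraMap ℚ[X] (RatFunc ℚ) (∑ i ∈ Finset.range m, X ^ i))⁻¹ := by
  rw [map_sum, ← geom_sum_mul q1 m, mul_inv_rev, mul_inv_cancel_left₀ q1_sub_one_ne_zero]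
  simp only [map_pow, q1_eq_algebraMap_X]

lemma algebraMap_div_mem_A1set (g h : ℚ[X]) (hh : h.eval 1 ≠ 0) :
    algebraMap ℚ[X] (RatFunc ℚ) g / algebraMap ℚ[X] (RatFunc ℚ) h ∈ A1set :=
  ⟨g, h, hh, div_mul_cancel₀ _ (RatFunc.algebraMap_ne_zero (by rintro rfl; simp at hh))⟩

lemma q1_mem_A1set : q1 ∈ A1set := by
  have h := algebraMap_div_mem_A1set X 1 (by simp)
  rwa [map_one, div_one, ← q1_eq_algebraMap_X] at h

lemma q1_inv_mem_A1set : q1⁻¹ ∈ A1set := by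
  have h := algebraMap_div_mem_A1set 1 X (by simp)
  rwa [map_one, one_div, ← q1_eq_algebraMap_X] at h

lemma sub_one_mul_inv_q1_pow_sub_one_mem_A1set {m : ℕ} (hm : 0 < m) :
    (q1 - 1) * (q1 ^ m - 1)⁻¹ ∈ A1set := by
  rw [sub_one_mul_inv_q1_pow_sub_one, ← one_div, ← map_one (algebraMap ℚ[X] (RatFunc ℚ))]
  exact algebraMap_div_mem_A1set _ _ (by simpa using hm.ne')

theorem Subring.val_zpow_sub_one_mul_mem {R : Type*} [CommRing R] {S : Subring R} {v : Rˣ}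
    {c : R} (hv : (v : R) ∈ S) (hv_inv : ((v⁻¹ : Rˣ) : R) ∈ S) (hc : ((v : R) - 1) * c ∈ S)
    (m : ℤ) : (((v ^ m : Rˣ) : R) - 1) * c ∈ S := by
  induction m using Int.induction_on with
  | zero => simp
  | succ m ih =>
    have step : (((v ^ ((m : ℤ) + 1) : Rˣ) : R) - 1) * c =
        v * ((((v ^ (m : ℤ) : Rˣ) : R) - 1) * c) + ((v : R) - 1) * c := by
      rw [zpow_add_one, Units.val_mul]; ring
    rw [step]
    exact add_mem (mul_mem hv ih) hc
  | pred m ih =>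
    have step : (((v ^ (-(m : ℤ) - 1) : Rˣ) : R) - 1) * c =
        ((v⁻¹ : Rˣ) : R) * ((((v ^ (-(m : ℤ)) : Rˣ) : R) - 1) * c - ((v : R) - 1) * c) := by
      rw [zpow_sub_one, Units.val_mul]
      linear_combination c * v.inv_mul
    rw [step]
    exact mul_mem hv_inv (sub_mem ih hc)

theorem Units.val_sub_val_inv_mul {R : Type*} [CommRing R] (K : Rˣ) {a b : R} (hab : a * b = 1)
    (c : R) : ((K : R) - ↑K⁻¹) * c = a * c * (1 + ↑K⁻¹) * (((K : R) - 1) * b) := by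
  linear_combination (-(c * (1 + ↑K⁻¹) * ((K : R) - 1))) * hab - c * K.inv_mul

section

variable {R : Type*} [CommRing R] [Algebra (RatFunc ℚ) R]

def qAdjoin (u : Rˣ) : Subring R :=
  Subring.closure ((algebraMap (RatFunc ℚ) R '' A1set) ∪
    {(u : R), ((u⁻¹ : Rˣ) : R), ((u : R) - 1) * algebraMap (RatFunc ℚ) R ((q1 - 1)⁻¹)})

variable (u : Rˣ)

lemma algebraMap_mem_qAdjoin {f : RatFunc ℚ} (hf : f ∈ A1set) :
    algebraMap (RatFunc ℚ) R f ∈ qAdjoin u :=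
  Subring.subset_closure (Or.inl ⟨f, hf, rfl⟩)

lemma mem_units_qAdjoin : u ∈ (qAdjoin u).toSubmonoid.units :=
  Submonoid.mem_units_of_val_mem_inv_val_mem _ (Subring.subset_closure (by simp))
    (Subring.subset_closure (by simp))

lemma val_zpow_mem_qAdjoin (m : ℤ) : ((u ^ m : Rˣ) : R) ∈ qAdjoin u :=
  Submonoid.val_mem_of_mem_units _ (zpow_mem (mem_units_qAdjoin u) m)

lemma val_zpow_sub_one_mul_mem_qAdjoin (m : ℤ) :
    (((u ^ m : Rˣ) : R) - 1) * algebraMap (RatFunc ℚ) R ((q1 - 1)⁻¹) ∈ qAdjoin u :=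
  Subring.val_zpow_sub_one_mul_mem (mem_units_qAdjoin u).1 (mem_units_qAdjoin u).2
    (Subring.subset_closure (by simp)) m

def qUnit : Rˣ :=
  Units.map (algebraMap (RatFunc ℚ) R : RatFunc ℚ →* R) (Units.mk0 q1 q1_ne_zero)

lemma val_qUnit_zpow (n : ℤ) : ((qUnit ^ n : Rˣ) : R) = algebraMap (RatFunc ℚ) R (q1 ^ n) := by
  rw [qUnit, ← map_zpow, Units.coe_map, Units.val_zpow_eq_zpow_val]
  rfl

lemma qUnit_mem_units_qAdjoin : (qUnit : Rˣ) ∈ (qAdjoin u).toSubmonoid.units := by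
  refine Submonoid.mem_units_of_val_mem_inv_val_mem _ ?_ ?_
  · rw [← zpow_one qUnit, val_qUnit_zpow, zpow_one]
    exact algebraMap_mem_qAdjoin u q1_mem_A1set
  · rw [← zpow_neg_one, val_qUnit_zpow, zpow_neg_one]
    exact algebraMap_mem_qAdjoin u q1_inv_mem_A1set

lemma algebraMap_q1_zpow_mem_qAdjoin (n : ℤ) :
    algebraMap (RatFunc ℚ) R (q1 ^ n) ∈ qAdjoin u := by
  rw [← val_qUnit_zpow]
  exact Submonoid.val_mem_of_mem_units _ (zpow_mem (qUnit_mem_units_qAdjoin u) n)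

lemma algebraMap_q1_zpow_sub_one_div_mem_qAdjoin (n : ℤ) :
    algebraMap (RatFunc ℚ) R ((q1 ^ n - 1) * (q1 - 1)⁻¹) ∈ qAdjoin u := by
  have hq := qUnit_mem_units_qAdjoin u
  have hc : (((qUnit : Rˣ) : R) - 1) * algebraMap (RatFunc ℚ) R ((q1 - 1)⁻¹) ∈ qAdjoin u := by
    rw [← zpow_one qUnit, val_qUnit_zpow, zpow_one, ← map_one (algebraMap (RatFunc ℚ) R),
      ← map_sub, ← map_mul, mul_inv_cancel₀ q1_sub_one_ne_zero, map_one]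
    exact one_mem _
  have h := Subring.val_zpow_sub_one_mul_mem hq.1 hq.2 hc n
  rwa [val_qUnit_zpow, ← map_one (algebraMap (RatFunc ℚ) R), ← map_sub, ← map_mul] at h

end

/-- In a commutative `ℚ(q)`-algebra with an invertible element `u = q^h`, setting
`(q^h; n)_q = (q^h qⁿ - 1)/(q - 1)`, one has
`(q^h; n)_q = qⁿ (q^h; 0)_q + (qⁿ - 1)/(q - 1)` and, with `K_i = q_i^{h_i} = u^{r_i}`,
`(K_i^l - K_i^{-l})/(q_i² - 1) = ((q-1)/(q_i²-1)) (1 + K_i^{-l}) (K_i^l - 1)/(q-1)`.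
Consequently both `(q^h; n)_q` and `(K_i^l - K_i^{-l})/(q_i² - 1)` lie in the
`A₁`-subalgebra generated by the `q^h`, `q^{-h}` and `(q^h; 0)_q`. -/
theorem A1_form_identities (R : Type*) [CommRing R] [Algebra (RatFunc ℚ) R]
    (u Ki : Rˣ) (r : ℕ) (hr : 0 < r) (hKi : Ki = u ^ r) (n l : ℤ) :
    (((u : R) * algebraMap (RatFunc ℚ) R (q1 ^ n) - 1) * algebraMap (RatFunc ℚ) R ((q1 - 1)⁻¹) =
      algebraMap (RatFunc ℚ) R (q1 ^ n) *
          (((u : R) - 1) * algebraMap (RatFunc ℚ) R ((q1 - 1)⁻¹)) +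
        algebraMap (RatFunc ℚ) R ((q1 ^ n - 1) * (q1 - 1)⁻¹)) ∧
    ((((Ki ^ l : Rˣ) : R) - ((Ki ^ (-l) : Rˣ) : R)) *
        algebraMap (RatFunc ℚ) R ((q1 ^ (2 * (r : ℤ)) - 1)⁻¹) =
      algebraMap (RatFunc ℚ) R ((q1 - 1) * (q1 ^ (2 * (r : ℤ)) - 1)⁻¹) *
        (1 + ((Ki ^ (-l) : Rˣ) : R)) *
        ((((Ki ^ l : Rˣ) : R) - 1) * algebraMap (RatFunc ℚ) R ((q1 - 1)⁻¹))) ∧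
    (((u : R) * algebraMap (RatFunc ℚ) R (q1 ^ n) - 1) * algebraMap (RatFunc ℚ) R ((q1 - 1)⁻¹) ∈
      Subring.closure ((algebraMap (RatFunc ℚ) R '' A1set) ∪
        {(u : R), ((u⁻¹ : Rˣ) : R),
          ((u : R) - 1) * algebraMap (RatFunc ℚ) R ((q1 - 1)⁻¹)})) ∧
    ((((Ki ^ l : Rˣ) : R) - ((Ki ^ (-l) : Rˣ) : R)) *
        algebraMap (RatFunc ℚ) R ((q1 ^ (2 * (r : ℤ)) - 1)⁻¹) ∈
      Subring.closure ((algebraMap (RatFunc ℚ) R '' A1set) ∪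
        {(u : R), ((u⁻¹ : Rˣ) : R),
          ((u : R) - 1) * algebraMap (RatFunc ℚ) R ((q1 - 1)⁻¹)})) := by
  set A := algebraMap (RatFunc ℚ) R
  have hKl : Ki ^ l = u ^ ((r : ℤ) * l) := by rw [hKi, ← zpow_natCast, ← zpow_mul]
  have hKnl : Ki ^ (-l) = u ^ (-((r : ℤ) * l)) := by rw [zpow_neg, hKl, ← zpow_neg]
  have shift : ((u : R) * A (q1 ^ n) - 1) * A ((q1 - 1)⁻¹) =
      A (q1 ^ n) * (((u : R) - 1) * A ((q1 - 1)⁻¹)) + A ((q1 ^ n - 1) * (q1 - 1)⁻¹) := by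
    simp only [map_mul, map_sub, map_one]
    ring
  have split : (((Ki ^ l : Rˣ) : R) - ((Ki ^ (-l) : Rˣ) : R)) * A ((q1 ^ (2 * (r : ℤ)) - 1)⁻¹) =
      A ((q1 - 1) * (q1 ^ (2 * (r : ℤ)) - 1)⁻¹) * (1 + ((Ki ^ (-l) : Rˣ) : R)) *
        ((((Ki ^ l : Rˣ) : R) - 1) * A ((q1 - 1)⁻¹)) := by
    rw [zpow_neg, map_mul]
    exact (Ki ^ l).val_sub_val_inv_mul
      (by rw [← map_mul, mul_inv_cancel₀ q1_sub_one_ne_zero, map_one]) _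
  refine ⟨shift, split, ?_, ?_⟩
  · rw [shift]
    exact add_mem (mul_mem (algebraMap_q1_zpow_mem_qAdjoin u n) (Subring.subset_closure (by simp)))
      (algebraMap_q1_zpow_sub_one_div_mem_qAdjoin u n)
  · rw [split, hKl, hKnl, (by norm_cast : q1 ^ (2 * (r : ℤ)) = q1 ^ (2 * r))]
    exact mul_mem (mul_mem (algebraMap_mem_qAdjoin u
      (sub_one_mul_inv_q1_pow_sub_one_mem_A1set (by omega)))
      (add_mem (one_mem _) (val_zpow_mem_qAdjoin u _))) (val_zpow_sub_one_mul_mem_qAdjoin u _)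

end
end
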